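/- arXiv:1709.08542 — 2 statements merged into one kernel-verified Lean document; each statement's English description precedes it below -/
import Mathlib

section
/- Let 0 < s ≤ 1, let Ψ be a C^∞ positive function on ℝ^d with |∂^α Ψ(x)| ≤ C_α Ψ(x) for |α| ≤ 2, and let T be a C^∞ real function on ℝ^d such that |∂^α T(x)| ≤ C_α Ψ(x) for all multi-indices with |α| = 1 or |α| = 2. Fix k ∈ {1,…,d}. Then there is a constant C > 0 such that for all complex-valued u ∈ C_0^∞(ℝ^d), ‖ Ψ^{−1+s/2} (∂_{x_k} T) u ‖² ≤ C ( ‖ Ψ^{−1+s} T u ‖² + ‖ X_k u ‖² + ‖u‖² ). -/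
open MeasureTheory Real Filter

noncomputable section

/-- `ℝ^d` with the Euclidean structure. -/
abbrev Rd (d : ℕ) := EuclideanSpace ℝ (Fin d)

/-- Partial derivative `∂_{x_j}` of a complex-valued function. -/
def pdC {d : ℕ} (j : Fin d) (f : Rd d → ℂ) : Rd d → ℂ :=
  fun x => fderiv ℝ f x (EuclideanSpace.single j (1:ℝ))

/-- Partial derivative `∂_{x_j}` of a real-valued function. -/
def pdR {d : ℕ} (j : Fin d) (f : Rd d → ℝ) : Rd d → ℝ :=
  fun x => fderiv ℝ f x (EuclideanSpace.single j (1:ℝ))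

/-- Iterated partial derivative in the `j`-th direction. -/
def pdIter {d : ℕ} (j : Fin d) : ℕ → (Rd d → ℝ) → (Rd d → ℝ)
  | 0, f => f
  | n+1, f => pdR j (pdIter j n f)

/-- Multi-index partial derivative `∂^α`. -/
def pdMulti {d : ℕ} (α : Fin d → ℕ) (f : Rd d → ℝ) : Rd d → ℝ :=
  (List.finRange d).foldr (fun j g => pdIter j (α j) g) f

/-- The finite set of multi-indices `α` with `|α| = q`. -/
def mIdx (d q : ℕ) : Finset (Fin d → ℕ) := Finset.Nat.antidiagonalTuple d q

/-- The magnetic field `B_{jk} = ∂_j A_k - ∂_k A_j`. -/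
def magB {d : ℕ} (A : Fin d → Rd d → ℝ) (j k : Fin d) : Rd d → ℝ :=
  fun x => pdR j (A k) x - pdR k (A j) x

/-- The quantity `m̌_q(x)`. -/
def mq {d p : ℕ} (A : Fin d → Rd d → ℝ) (U : Fin p → Rd d → ℝ) (V : Rd d → ℝ) :
    ℕ → Rd d → ℝ
  | 0, x => ∑ ℓ, |U ℓ x|
  | q+1, x =>
      (∑ ℓ, ∑ α ∈ mIdx d (q+1), |pdMulti α (U ℓ) x|)
      + (∑ jk ∈ Finset.univ.filter (fun jk : Fin d × Fin d => jk.1 < jk.2),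
          ∑ α ∈ mIdx d q, |pdMulti α (magB A jk.1 jk.2) x|)
      + ∑ α ∈ mIdx d q, |pdMulti α V x|

/-- The quantity `m̌ʳ(x) = 1 + ∑_{q=0}^r m̌_q(x)`. -/
def mr {d p : ℕ} (A : Fin d → Rd d → ℝ) (U : Fin p → Rd d → ℝ) (V : Rd d → ℝ)
    (r : ℕ) (x : Rd d) : ℝ :=
  1 + ∑ q ∈ Finset.range (r+1), mq A U V q x

/-- The magnetic derivative `X_j u = (D_{x_j} - A_j) u`, `D_{x_j} = -i ∂_{x_j}`. -/
def Xop {d : ℕ} (A : Fin d → Rd d → ℝ) (j : Fin d) (u : Rd d → ℂ) : Rd d → ℂ :=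
  fun x => -Complex.I * pdC j u x - (A j x : ℂ) * u x

/-- The potential `W = ∑_ℓ U_ℓ² + iV`. -/
def Wfun {d p : ℕ} (U : Fin p → Rd d → ℝ) (V : Rd d → ℝ) (x : Rd d) : ℂ :=
  ((∑ ℓ, (U ℓ x)^2 : ℝ) : ℂ) + (V x : ℝ) * Complex.I

/-- The operator `P_{A,W} u = ∑_j X_j² u + W u` with `W = ∑_ℓ U_ℓ² + iV`. -/
def Pop {d p : ℕ} (A : Fin d → Rd d → ℝ) (U : Fin p → Rd d → ℝ) (V : Rd d → ℝ)
    (u : Rd d → ℂ) : Rd d → ℂ :=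
  fun x => (∑ j, Xop A j (Xop A j u) x) + Wfun U V x * u x

/-- The function `Φ(x,t)`. -/
def Phi {d p : ℕ} (A : Fin d → Rd d → ℝ) (U : Fin p → Rd d → ℝ) (V : Rd d → ℝ)
    (r : ℕ) (x : Rd d) (t : ℝ) : ℝ :=
  (∑ ℓ, ∑ q ∈ Finset.range (r+1), t^(q+1) * ∑ α ∈ mIdx d q, |pdMulti α (U ℓ) x|)
  + (∑ jk ∈ Finset.univ.filter (fun jk : Fin d × Fin d => jk.1 < jk.2),
      ∑ q ∈ Finset.range r, t^(q+2) * ∑ α ∈ mIdx d q, |pdMulti α (magB A jk.1 jk.2) x|)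
  + ∑ q ∈ Finset.range r, t^(q+2) * ∑ α ∈ mIdx d q, |pdMulti α V x|

/-- `R(x,μ) = sup { t ∈ [0,1] : Φ(x,t) ≤ μ }`. -/
def Rfun {d p : ℕ} (A : Fin d → Rd d → ℝ) (U : Fin p → Rd d → ℝ) (V : Rd d → ℝ)
    (r : ℕ) (x : Rd d) (μ : ℝ) : ℝ :=
  sSup {t : ℝ | t ∈ Set.Icc (0:ℝ) 1 ∧ Phi A U V r x t ≤ μ}


lemma amgm {m w n X : ℝ} (hm : 0 ≤ m) (hn : 0 ≤ n) (hX : 0 ≤ X) (hw : w^2 ≤ n * X) :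
    2*(m*|w|) ≤ m^2*n + X := by
  have h : (2*(m*|w|))^2 ≤ (m^2*n + X)^2 := by
    nlinarith [sq_abs w, sq_nonneg (m^2*n - X), mul_le_mul_of_nonneg_left hw (sq_nonneg m)]
  exact le_of_pow_le_pow_left₀ two_ne_zero (by positivity) h

lemma mnbd {c m n : ℝ} (hc : 0 ≤ c) (hm : 0 ≤ m) (hn : 0 ≤ n) :
    c*m*n ≤ c*(m^2*n + n) := by
  nlinarith [mul_nonneg (mul_nonneg hc hn) (sq_nonneg (m-1)),
    mul_nonneg (mul_nonneg hc hm) hn]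

lemma combine {C1 C2 c Z X n : ℝ} (h1 : 0 ≤ C1) (h2 : 0 ≤ C2) (h3 : 0 ≤ c)
    (hZ : 0 ≤ Z) (hX : 0 ≤ X) (hn : 0 ≤ n) :
    C1*(Z+X) + C2*(Z+n) + c*(Z+n) ≤ (C1+C2+c)*(Z+X+n) := by
  nlinarith [mul_nonneg h2 hX, mul_nonneg h3 hX, mul_nonneg h1 hn]

lemma ptwise (s C1 C2 C3 ψ t t1 t2 ψ1 a b pr pi A : ℝ)
    (hψ : 0 < ψ) (hC1 : 0 ≤ C1) (hC2 : 0 ≤ C2) (hC3 : 0 ≤ C3)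
    (h1 : |t1| ≤ C1 * ψ) (h2 : |t2| ≤ C2 * ψ) (h3 : |ψ1| ≤ C3 * ψ) :
    |t * (ψ ^ (s-2) * (t1 * (2*(a*pr + b*pi)) + (a*a + b*b) * t2)
        + (t1 * (a*a + b*b)) * ((s-2) * ψ ^ (s-3) * ψ1))|
      ≤ (C1 + C2 + C1*C3*|s-2|) *
        (ψ ^ (2*s-2) * t^2 * (a*a+b*b) + ((pi - A*a)^2 + (pr + A*b)^2) + (a*a+b*b)) := by
  have hψ' : (0:ℝ) ≤ ψ := hψ.le
  have e1 : ψ ^ (s - 2) * ψ = ψ ^ (s - 1) := by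
    nth_rewrite 2 [← Real.rpow_one ψ]
    rw [← Real.rpow_add hψ]; ring_nf
  have e2 : ψ ^ (s - 3) * (ψ * ψ) = ψ ^ (s - 1) := by
    have hψ2 : ψ * ψ = ψ ^ (2:ℝ) := by
      rw [show (2:ℝ) = ((2:ℕ):ℝ) by norm_num, Real.rpow_natCast]; ring
    rw [hψ2, ← Real.rpow_add hψ]; ring_nf
  have e3 : ψ ^ (s-1) * ψ ^ (s-1) = ψ ^ (2*s-2) := by
    rw [← Real.rpow_add hψ]; ring_nf
  have hM : (0:ℝ) ≤ ψ ^ (s-1) := Real.rpow_nonneg hψ' _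
  have hP2 : (0:ℝ) ≤ ψ ^ (s-2) := Real.rpow_nonneg hψ' _
  have hP3 : (0:ℝ) ≤ ψ ^ (s-3) := Real.rpow_nonneg hψ' _
  -- make the rpow's opaque
  obtain ⟨P2, eP2⟩ : ∃ y, ψ ^ (s-2) = y := ⟨_, rfl⟩
  obtain ⟨P3, eP3⟩ : ∃ y, ψ ^ (s-3) = y := ⟨_, rfl⟩
  obtain ⟨M, eM⟩ : ∃ y, ψ ^ (s-1) = y := ⟨_, rfl⟩
  obtain ⟨Q, eQ⟩ : ∃ y, ψ ^ (2*s-2) = y := ⟨_, rfl⟩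
  obtain ⟨c3, ec3⟩ : ∃ y, |s-2| = y := ⟨_, rfl⟩
  rw [eP2, eM] at e1
  rw [eP3, eM] at e2
  rw [eM, eQ] at e3
  rw [eM] at hM; rw [eP2] at hP2; rw [eP3] at hP3
  rw [eP2, eP3, eQ, ec3]
  have hc3 : 0 ≤ c3 := by rw [← ec3]; exact abs_nonneg _
  -- abbreviations as pure variables now
  have hn0 : (0:ℝ) ≤ a*a + b*b := by nlinarith [mul_self_nonneg a, mul_self_nonneg b]
  have hX2 : (0:ℝ) ≤ (pi - A*a)^2 + (pr + A*b)^2 := by positivity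
  have hw : (a*pr + b*pi)^2 ≤ (a*a+b*b) * ((pi - A*a)^2 + (pr + A*b)^2) := by
    nlinarith [sq_nonneg (a*(pi - A*a) - b*(pr + A*b))]
  have em : (M*|t|)^2 = Q * t^2 := by rw [mul_pow, sq_abs, ← e3]; ring
  have hmt : (0:ℝ) ≤ M * |t| := mul_nonneg hM (abs_nonneg t)
  -- three term bounds
  have key1 : |t * (P2 * (t1 * (2*(a*pr + b*pi))))|
      ≤ C1 * ((M*|t|)^2*(a*a+b*b) + ((pi - A*a)^2 + (pr + A*b)^2)) := by
    have hb : |t * (P2 * (t1 * (2*(a*pr+b*pi))))| = 2 * ((P2 * |t1| * |t|) * |a*pr+b*pi|) := by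
      rw [abs_mul, abs_mul, abs_mul, abs_mul, abs_of_nonneg hP2, abs_two]; ring
    have hc : P2 * |t1| * |t| ≤ C1 * (M*|t|) := by
      have h5 : P2 * |t1| ≤ C1 * M := by
        calc P2 * |t1| ≤ P2 * (C1 * ψ) := mul_le_mul_of_nonneg_left h1 hP2
          _ = C1 * (P2 * ψ) := by ring
          _ = C1 * M := by rw [e1]
      calc P2 * |t1| * |t| ≤ (C1 * M) * |t| := mul_le_mul_of_nonneg_right h5 (abs_nonneg t)
        _ = C1 * (M*|t|) := by ring
    have hAM : 2*((M*|t|)*|a*pr+b*pi|) ≤ (M*|t|)^2*(a*a+b*b) + ((pi - A*a)^2 + (pr + A*b)^2) :=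
      amgm hmt hn0 hX2 hw
    calc |t * (P2 * (t1 * (2*(a*pr+b*pi))))| = 2*((P2 * |t1| * |t|) * |a*pr+b*pi|) := hb
      _ ≤ 2*((C1*(M*|t|))*|a*pr+b*pi|) := by
          apply mul_le_mul_of_nonneg_left _ (by norm_num)
          exact mul_le_mul_of_nonneg_right hc (abs_nonneg _)
      _ = C1 * (2*((M*|t|)*|a*pr+b*pi|)) := by ring
      _ ≤ C1 * ((M*|t|)^2*(a*a+b*b) + ((pi - A*a)^2 + (pr + A*b)^2)) :=
          mul_le_mul_of_nonneg_left hAM hC1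
  have key2 : |t * (P2 * ((a*a+b*b) * t2))| ≤ C2 * ((M*|t|)^2*(a*a+b*b) + (a*a+b*b)) := by
    have hb : |t * (P2 * ((a*a+b*b) * t2))| = (P2 * |t2| * |t|) * (a*a+b*b) := by
      rw [abs_mul, abs_mul, abs_mul, abs_of_nonneg hP2, abs_of_nonneg hn0]; ring
    have hc : P2 * |t2| * |t| ≤ C2 * (M*|t|) := by
      have h5 : P2 * |t2| ≤ C2 * M := by
        calc P2 * |t2| ≤ P2 * (C2 * ψ) := mul_le_mul_of_nonneg_left h2 hP2
          _ = C2 * (P2 * ψ) := by ring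
          _ = C2 * M := by rw [e1]
      calc P2 * |t2| * |t| ≤ (C2 * M) * |t| := mul_le_mul_of_nonneg_right h5 (abs_nonneg t)
        _ = C2 * (M*|t|) := by ring
    calc |t * (P2 * ((a*a+b*b) * t2))| = (P2 * |t2| * |t|) * (a*a+b*b) := hb
      _ ≤ (C2 * (M*|t|)) * (a*a+b*b) := mul_le_mul_of_nonneg_right hc hn0
      _ = C2 * (M*|t|) * (a*a+b*b) := by ring
      _ ≤ C2 * ((M*|t|)^2*(a*a+b*b) + (a*a+b*b)) := mnbd hC2 hmt hn0
  have key3 : |t * ((t1 * (a*a+b*b)) * ((s-2) * P3 * ψ1))|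
      ≤ (C1*C3*c3) * ((M*|t|)^2*(a*a+b*b) + (a*a+b*b)) := by
    have hb : |t * ((t1 * (a*a+b*b)) * ((s-2) * P3 * ψ1))|
        = (c3 * (P3 * (|t1| * |ψ1|)) * |t|) * (a*a+b*b) := by
      rw [abs_mul, abs_mul, abs_mul, abs_mul, abs_mul, abs_of_nonneg hP3,
        abs_of_nonneg hn0, ← ec3]
      ring
    have hc : P3 * (|t1| * |ψ1|) ≤ C1 * C3 * M := by
      have h5 : |t1| * |ψ1| ≤ (C1*ψ) * (C3*ψ) :=
        mul_le_mul h1 h3 (abs_nonneg _) (by positivity)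
      calc P3 * (|t1| * |ψ1|) ≤ P3 * ((C1*ψ)*(C3*ψ)) := mul_le_mul_of_nonneg_left h5 hP3
        _ = C1 * C3 * (P3 * (ψ * ψ)) := by ring
        _ = C1 * C3 * M := by rw [e2]
    have hd : c3 * (P3 * (|t1| * |ψ1|)) * |t| ≤ (C1*C3*c3) * (M*|t|) := by
      calc c3 * (P3 * (|t1| * |ψ1|)) * |t| ≤ c3 * (C1*C3*M) * |t| := by
            apply mul_le_mul_of_nonneg_right _ (abs_nonneg t)
            exact mul_le_mul_of_nonneg_left hc hc3
        _ = (C1*C3*c3) * (M*|t|) := by ring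
    have hcc : (0:ℝ) ≤ C1*C3*c3 := by positivity
    calc |t * ((t1 * (a*a+b*b)) * ((s-2) * P3 * ψ1))|
        = (c3 * (P3 * (|t1| * |ψ1|)) * |t|) * (a*a+b*b) := hb
      _ ≤ ((C1*C3*c3) * (M*|t|)) * (a*a+b*b) := mul_le_mul_of_nonneg_right hd hn0
      _ = (C1*C3*c3) * (M*|t|) * (a*a+b*b) := by ring
      _ ≤ (C1*C3*c3) * ((M*|t|)^2*(a*a+b*b) + (a*a+b*b)) := mnbd hcc hmt hn0
  have hcc : (0:ℝ) ≤ C1*C3*c3 := by positivity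
  have hZ : (0:ℝ) ≤ (M*|t|)^2*(a*a+b*b) := by positivity
  calc |t * (P2 * (t1 * (2*(a*pr + b*pi)) + (a*a + b*b) * t2)
        + (t1 * (a*a + b*b)) * ((s-2) * P3 * ψ1))|
      = |t * (P2 * (t1 * (2*(a*pr + b*pi)))) + (t * (P2 * ((a*a+b*b) * t2))
          + t * ((t1 * (a*a+b*b)) * ((s-2) * P3 * ψ1)))| := by ring_nf
    _ ≤ |t * (P2 * (t1 * (2*(a*pr + b*pi))))| + (|t * (P2 * ((a*a+b*b) * t2))|
          + |t * ((t1 * (a*a+b*b)) * ((s-2) * P3 * ψ1))|) :=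
        (abs_add_le _ _).trans (add_le_add_right (abs_add_le _ _) _)
    _ ≤ C1 * ((M*|t|)^2*(a*a+b*b) + ((pi - A*a)^2 + (pr + A*b)^2))
        + (C2 * ((M*|t|)^2*(a*a+b*b) + (a*a+b*b))
          + (C1*C3*c3) * ((M*|t|)^2*(a*a+b*b) + (a*a+b*b))) :=
        add_le_add key1 (add_le_add key2 key3)
    _ ≤ (C1 + C2 + C1*C3*c3) * ((M*|t|)^2*(a*a+b*b)
          + ((pi - A*a)^2 + (pr + A*b)^2) + (a*a+b*b)) := by
        have := combine (C1 := C1) (C2 := C2) (c := C1*C3*c3)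
          (Z := (M*|t|)^2*(a*a+b*b)) (X := (pi - A*a)^2 + (pr + A*b)^2)
          (n := a*a+b*b) hC1 hC2 hcc hZ hX2 hn0
        linarith
    _ = (C1 + C2 + C1*C3*c3) * (Q * t^2 * (a*a+b*b)
          + ((pi - A*a)^2 + (pr + A*b)^2) + (a*a+b*b)) := by rw [em]

-- aux lemma 1 : pdMulti at Pi.single
lemma foldr_pdIter_single {d : ℕ} (k : Fin d) (m : ℕ) (f : Rd d → ℝ) :
    ∀ l : List (Fin d), l.Nodup →
      (k ∈ l → l.foldr (fun j g => pdIter j ((Pi.single k m : Fin d → ℕ) j) g) f = pdIter k m f)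
      ∧ (k ∉ l → l.foldr (fun j g => pdIter j ((Pi.single k m : Fin d → ℕ) j) g) f = f) := by
  intro l
  induction l with
  | nil => intro _; exact ⟨fun h => absurd h List.not_mem_nil, fun _ => rfl⟩
  | cons j t ih =>
    intro hnd
    have hnd' := (List.nodup_cons.mp hnd)
    obtain ⟨ih1, ih2⟩ := ih hnd'.2
    constructor
    · intro hk
      rcases List.mem_cons.mp hk with h | h
      · subst h
        simp only [List.foldr_cons, Pi.single_eq_same]
        rw [ih2 hnd'.1]
      · have hjk : j ≠ k := by rintro rfl; exact hnd'.1 h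
        simp only [List.foldr_cons, Pi.single_eq_of_ne hjk, ih1 h]
        rfl
    · intro hk
      have hjk : j ≠ k := by rintro rfl; exact hk List.mem_cons_self
      have hkt : k ∉ t := fun h => hk (List.mem_cons_of_mem _ h)
      simp only [List.foldr_cons, Pi.single_eq_of_ne hjk, ih2 hkt]
      rfl

lemma pdMulti_single {d : ℕ} (k : Fin d) (m : ℕ) (f : Rd d → ℝ) :
    pdMulti (Pi.single k m : Fin d → ℕ) f = pdIter k m f :=
  (foldr_pdIter_single k m f (List.finRange d) (List.nodup_finRange d)).1
    (List.mem_finRange k)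

lemma sum_single {d : ℕ} (k : Fin d) (m : ℕ) : (∑ i, (Pi.single k m : Fin d → ℕ) i) = m := by
  simp [Finset.sum_pi_single']

lemma contDiff_pdR {d : ℕ} (k : Fin d) {f : Rd d → ℝ} (hf : ContDiff ℝ (⊤ : ℕ∞) f) :
    ContDiff ℝ (⊤ : ℕ∞) (pdR k f) :=
  (ContinuousLinearMap.apply ℝ ℝ (EuclideanSpace.single k (1:ℝ))).contDiff.comp
    (contDiff_infty_iff_fderiv.mp hf).2

lemma contDiff_pdC {d : ℕ} (k : Fin d) {f : Rd d → ℂ} (hf : ContDiff ℝ (⊤ : ℕ∞) f) :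
    ContDiff ℝ (⊤ : ℕ∞) (pdC k f) :=
  (ContinuousLinearMap.apply ℝ ℂ (EuclideanSpace.single k (1:ℝ))).contDiff.comp
    (contDiff_infty_iff_fderiv.mp hf).2

lemma norm_sq_eq (z : ℂ) : ‖z‖^2 = z.re*z.re + z.im*z.im := by
  rw [Complex.sq_norm, Complex.normSq_apply]

/-- commutator-type estimate
`‖Ψ^{-1+s/2} (∂_k T) u‖² ≤ C (‖Ψ^{-1+s} T u‖² + ‖X_k u‖² + ‖u‖²)`. -/
theorem statement_6 (d : ℕ) (hd : 1 ≤ d) (s : ℝ) (hs : 0 < s) (hs1 : s ≤ 1)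
    (A : Fin d → Rd d → ℝ) (hA : ∀ m, ContDiff ℝ (⊤ : ℕ∞) (A m))
    (Ψ : Rd d → ℝ) (hΨ : ContDiff ℝ (⊤ : ℕ∞) Ψ) (hΨpos : ∀ x, 0 < Ψ x)
    (hΨd : ∀ α : Fin d → ℕ, (∑ i, α i) ≤ 2 →
      ∃ Cα > 0, ∀ x, |pdMulti α Ψ x| ≤ Cα * Ψ x)
    (T : Rd d → ℝ) (hT : ContDiff ℝ (⊤ : ℕ∞) T)
    (hTd : ∀ α : Fin d → ℕ, ((∑ i, α i) = 1 ∨ (∑ i, α i) = 2) →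
      ∃ Cα > 0, ∀ x, |pdMulti α T x| ≤ Cα * Ψ x)
    (k : Fin d) :
    ∃ C > 0, ∀ u : Rd d → ℂ, ContDiff ℝ (⊤ : ℕ∞) u → HasCompactSupport u →
      (∫ x : Rd d, (Ψ x) ^ (s - 2) * (pdR k T x)^2 * ‖u x‖^2)
        ≤ C * ((∫ x : Rd d, (Ψ x) ^ (2*s - 2) * (T x)^2 * ‖u x‖^2)
            + (∫ x : Rd d, ‖Xop A k u x‖^2) + ∫ x : Rd d, ‖u x‖^2) := by
  classical
  have hsum1 : (∑ i, (Pi.single k 1 : Fin d → ℕ) i) = 1 := sum_single k 1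
  have hsum2 : (∑ i, (Pi.single k 2 : Fin d → ℕ) i) = 2 := sum_single k 2
  obtain ⟨C1, hC1pos, hC1⟩ := hTd (Pi.single k 1) (Or.inl hsum1)
  obtain ⟨C2, hC2pos, hC2⟩ := hTd (Pi.single k 2) (Or.inr hsum2)
  obtain ⟨C3, hC3pos, hC3⟩ := hΨd (Pi.single k 1) (by rw [hsum1]; norm_num)
  rw [pdMulti_single] at hC1 hC2 hC3
  have hC1' : ∀ x, |pdR k T x| ≤ C1 * Ψ x := hC1
  have hC2' : ∀ x, |pdR k (pdR k T) x| ≤ C2 * Ψ x := hC2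
  have hC3' : ∀ x, |pdR k Ψ x| ≤ C3 * Ψ x := hC3
  have hTinf : ContDiff ℝ (⊤ : ℕ∞) T := hT.of_le (by simp)
  have hPsiinf : ContDiff ℝ (⊤ : ℕ∞) Ψ := hΨ.of_le (by simp)
  have hT1C : ContDiff ℝ (⊤ : ℕ∞) (pdR k T) := contDiff_pdR k hTinf
  have hT2C : ContDiff ℝ (⊤ : ℕ∞) (pdR k (pdR k T)) := contDiff_pdR k hT1C
  have hΨ1C : ContDiff ℝ (⊤ : ℕ∞) (pdR k Ψ) := contDiff_pdR k hPsiinf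
  have hΨc : Continuous Ψ := hPsiinf.continuous
  have hrp : ∀ c : ℝ, ContDiff ℝ (⊤ : ℕ∞) (fun x => Ψ x ^ c) := by
    intro c
    rw [contDiff_iff_contDiffAt]
    intro x
    exact (hPsiinf.contDiffAt).rpow_const_of_ne (ne_of_gt (hΨpos x))
  refine ⟨C1 + C2 + C1*C3*|s-2|, by positivity, ?_⟩
  intro u hu hcs
  have huinf : ContDiff ℝ (⊤ : ℕ∞) u := hu.of_le (by simp)
  have huc : Continuous u := huinf.continuous
  have hud : Differentiable ℝ u := huinf.differentiable (by simp)
  have hTd' : Differentiable ℝ T := hT.differentiable (by simp)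
  set g : Rd d → ℝ :=
    fun y => Ψ y ^ (s-2) * (pdR k T y * ((u y).re*(u y).re + (u y).im*(u y).im)) with hg_def
  have haC : ContDiff ℝ (⊤ : ℕ∞) (fun y => (u y).re) := Complex.reCLM.contDiff.comp huinf
  have hbC : ContDiff ℝ (⊤ : ℕ∞) (fun y => (u y).im) := Complex.imCLM.contDiff.comp huinf
  have hnC : ContDiff ℝ (⊤ : ℕ∞) (fun y => (u y).re*(u y).re + (u y).im*(u y).im) :=
    (haC.mul haC).add (hbC.mul hbC)
  have hgC : ContDiff ℝ (⊤ : ℕ∞) g := (hrp (s-2)).mul (hT1C.mul hnC)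
  have hgd : Differentiable ℝ g := hgC.differentiable (by simp)
  have hPderiv : ∀ x, HasFDerivAt (fun y => Ψ y ^ (s-2))
      (((s-2) * Ψ x ^ (s-2-1)) • fderiv ℝ Ψ x) x := by
    intro x
    exact (Real.hasDerivAt_rpow_const (Or.inl (ne_of_gt (hΨpos x)))).comp_hasFDerivAt x
      (hPsiinf.differentiable (by simp) x).hasFDerivAt
  have key : ∀ x, fderiv ℝ g x (EuclideanSpace.single k (1:ℝ))
      = Ψ x ^ (s-2) * (pdR k T x * (2*((u x).re * (pdC k u x).re + (u x).im * (pdC k u x).im))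
          + ((u x).re*(u x).re + (u x).im*(u x).im) * pdR k (pdR k T) x)
        + (pdR k T x * ((u x).re*(u x).re + (u x).im*(u x).im)) * ((s-2) * Ψ x ^ (s-3) * pdR k Ψ x) := by
    intro x
    have hux : HasFDerivAt u (fderiv ℝ u x) x := (hud x).hasFDerivAt
    have hax : HasFDerivAt (fun y => (u y).re) (Complex.reCLM.comp (fderiv ℝ u x)) x :=
      (Complex.reCLM.hasFDerivAt).comp x hux
    have hbx : HasFDerivAt (fun y => (u y).im) (Complex.imCLM.comp (fderiv ℝ u x)) x :=
      (Complex.imCLM.hasFDerivAt).comp x hux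
    have hT1x : HasFDerivAt (pdR k T) (fderiv ℝ (pdR k T) x) x :=
      ((hT1C.differentiable (by simp)) x).hasFDerivAt
    have hgx := (hPderiv x).mul (hT1x.mul ((hax.mul hax).add (hbx.mul hbx)))
    have hfd := hgx.fderiv
    have hgg : fderiv ℝ g x = fderiv ℝ
        (fun y => Ψ y ^ (s-2) * (pdR k T y * ((u y).re*(u y).re + (u y).im*(u y).im))) x := rfl
    rw [show fderiv ℝ g x = _ from hfd]
    have he : s - 2 - 1 = s - 3 := by ring
    simp only [ContinuousLinearMap.add_apply, ContinuousLinearMap.smul_apply,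
      ContinuousLinearMap.coe_comp', Function.comp_apply, Complex.reCLM_apply,
      Complex.imCLM_apply, smul_eq_mul, he, pdR, pdC, Pi.mul_apply, Pi.add_apply]
    ring
  have hXval : ∀ x, ‖Xop A k u x‖^2
      = ((pdC k u x).im - A k x * (u x).re)^2 + ((pdC k u x).re + A k x * (u x).im)^2 := by
    intro x
    rw [norm_sq_eq]
    simp only [Xop, Complex.sub_re, Complex.sub_im, Complex.mul_re, Complex.mul_im,
      Complex.neg_re, Complex.neg_im, Complex.I_re, Complex.I_im,
      Complex.ofReal_re, Complex.ofReal_im]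
    ring
  have h0 : ∀ x, x ∉ tsupport u → u x = 0 := fun x hx => image_eq_zero_of_notMem_tsupport hx
  have h0' : ∀ x, x ∉ tsupport u → fderiv ℝ u x = 0 := by
    intro x hx
    by_contra h
    exact hx (support_fderiv_subset ℝ (Function.mem_support.mpr h))
  have mkInt : ∀ f : Rd d → ℝ, Continuous f → (∀ x, x ∉ tsupport u → f x = 0) →
      Integrable f (volume : Measure (Rd d)) := by
    intro f hf hsupp
    exact hf.integrable_of_hasCompactSupport (HasCompactSupport.intro hcs hsupp)
  have hpc : Continuous (pdC k u) := (contDiff_pdC k huinf).continuous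
  have hXc : Continuous (Xop A k u) := by
    have : Continuous (fun x => -Complex.I * pdC k u x - ((A k x : ℝ) : ℂ) * u x) :=
      (continuous_const.mul hpc).sub
        ((Complex.continuous_ofReal.comp (hA k).continuous).mul huc)
    exact this
  have har : Continuous (fun x => (u x).re) := Complex.continuous_re.comp huc
  have hai : Continuous (fun x => (u x).im) := Complex.continuous_im.comp huc
  have hprc : Continuous (fun x => (pdC k u x).re) := Complex.continuous_re.comp hpc
  have hpic : Continuous (fun x => (pdC k u x).im) := Complex.continuous_im.comp hpc
  have intI1 : Integrable (fun x => Ψ x ^ (2*s-2) * T x^2 * ‖u x‖^2) (volume : Measure (Rd d)) :=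
    mkInt _ (((hrp (2*s-2)).continuous.mul (hT.continuous.pow 2)).mul (huc.norm.pow 2))
      (fun x hx => by simp [h0 x hx])
  have intI2 : Integrable (fun x => ‖Xop A k u x‖^2) (volume : Measure (Rd d)) :=
    mkInt _ (hXc.norm.pow 2) (fun x hx => by
      have h1 : pdC k u x = 0 := by simp [pdC, h0' x hx]
      simp [Xop, h1, h0 x hx])
  have intI3 : Integrable (fun x => ‖u x‖^2) (volume : Measure (Rd d)) :=
    mkInt _ (huc.norm.pow 2) (fun x hx => by simp [h0 x hx])
  have int1 : Integrable (fun x => pdR k T x * g x) (volume : Measure (Rd d)) :=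
    mkInt _ (hT1C.continuous.mul hgC.continuous) (fun x hx => by simp [hg_def, h0 x hx])
  have int3 : Integrable (fun x => T x * g x) (volume : Measure (Rd d)) :=
    mkInt _ (hT.continuous.mul hgC.continuous) (fun x hx => by simp [hg_def, h0 x hx])
  have int2 : Integrable (fun x => T x * fderiv ℝ g x (EuclideanSpace.single k (1:ℝ)))
      (volume : Measure (Rd d)) := by
    have heq : (fun x => T x * fderiv ℝ g x (EuclideanSpace.single k (1:ℝ)))
        = fun x => T x * (Ψ x ^ (s-2) * (pdR k T x
            * (2*((u x).re * (pdC k u x).re + (u x).im * (pdC k u x).im))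
          + ((u x).re*(u x).re + (u x).im*(u x).im) * pdR k (pdR k T) x)
        + (pdR k T x * ((u x).re*(u x).re + (u x).im*(u x).im)) * ((s-2) * Ψ x ^ (s-3) * pdR k Ψ x)) :=
      funext fun x => by rw [key x]
    rw [heq]
    refine mkInt _ ?_ ?_
    · exact hT.continuous.mul (((hrp (s-2)).continuous.mul
        ((hT1C.continuous.mul (continuous_const.mul
            ((har.mul hprc).add (hai.mul hpic)))).add
          (((har.mul har).add (hai.mul hai)).mul hT2C.continuous))).add
        ((hT1C.continuous.mul ((har.mul har).add (hai.mul hai))).mul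
          ((continuous_const.mul (hrp (s-3)).continuous).mul hΨ1C.continuous)))
    · intro x hx
      simp [h0 x hx]
  have int1' : Integrable (fun x => fderiv ℝ T x (EuclideanSpace.single k (1:ℝ)) * g x)
      (volume : Measure (Rd d)) := int1
  have ibp := integral_mul_fderiv_eq_neg_fderiv_mul_of_integrable
      (μ := (volume : Measure (Rd d))) (f := T) (g := g)
      (v := EuclideanSpace.single k (1:ℝ)) int1' int2 int3 (fun x _ => hTd' x) (fun x _ => hgd x)
  have hpt : ∀ x, |T x * fderiv ℝ g x (EuclideanSpace.single k (1:ℝ))|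
      ≤ (C1 + C2 + C1*C3*|s-2|) *
        (Ψ x ^ (2*s-2) * T x^2 * ‖u x‖^2 + ‖Xop A k u x‖^2 + ‖u x‖^2) := by
    intro x
    rw [key x, hXval x, norm_sq_eq (u x)]
    exact ptwise s C1 C2 C3 (Ψ x) (T x) (pdR k T x) (pdR k (pdR k T) x) (pdR k Ψ x)
      ((u x).re) ((u x).im) ((pdC k u x).re) ((pdC k u x).im) (A k x)
      (hΨpos x) hC1pos.le hC2pos.le hC3pos.le (hC1' x) (hC2' x) (hC3' x)
  have hint_sum : Integrable (fun x => (C1 + C2 + C1*C3*|s-2|) *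
      (Ψ x ^ (2*s-2) * T x^2 * ‖u x‖^2 + ‖Xop A k u x‖^2 + ‖u x‖^2))
      (volume : Measure (Rd d)) := ((intI1.add intI2).add intI3).const_mul _
  have heqL : (fun x : Rd d => Ψ x ^ (s - 2) * (pdR k T x)^2 * ‖u x‖^2)
      = fun x => pdR k T x * g x := by
    funext x
    simp only [hg_def]
    rw [norm_sq_eq (u x)]
    ring
  calc (∫ x : Rd d, Ψ x ^ (s - 2) * (pdR k T x)^2 * ‖u x‖^2)
      = ∫ x : Rd d, pdR k T x * g x := by rw [heqL]
    _ = ∫ x : Rd d, fderiv ℝ T x (EuclideanSpace.single k (1:ℝ)) * g x := rfl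
    _ = - ∫ x : Rd d, T x * fderiv ℝ g x (EuclideanSpace.single k (1:ℝ)) := by
        rw [ibp, neg_neg]
    _ ≤ |∫ x : Rd d, T x * fderiv ℝ g x (EuclideanSpace.single k (1:ℝ))| := neg_le_abs _
    _ ≤ ∫ x : Rd d, |T x * fderiv ℝ g x (EuclideanSpace.single k (1:ℝ))| := by
        have h := norm_integral_le_integral_norm (μ := (volume : Measure (Rd d)))
          (fun x => T x * fderiv ℝ g x (EuclideanSpace.single k (1:ℝ)))
        simp only [Real.norm_eq_abs] at h
        exact h
    _ ≤ ∫ x : Rd d, (C1 + C2 + C1*C3*|s-2|) *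
          (Ψ x ^ (2*s-2) * T x^2 * ‖u x‖^2 + ‖Xop A k u x‖^2 + ‖u x‖^2) :=
        integral_mono int2.abs hint_sum (fun x => hpt x)
    _ = (C1 + C2 + C1*C3*|s-2|) * ((∫ x : Rd d, Ψ x ^ (2*s-2) * T x^2 * ‖u x‖^2)
          + (∫ x : Rd d, ‖Xop A k u x‖^2) + ∫ x : Rd d, ‖u x‖^2) := by
        have hadd12 : Integrable (fun x : Rd d => Ψ x ^ (2*s-2) * T x^2 * ‖u x‖^2
            + ‖Xop A k u x‖^2) (volume : Measure (Rd d)) := intI1.add intI2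
        rw [integral_const_mul, integral_add hadd12 intI3, integral_add intI1 intI2]


end
end

section
/- Suppose (A,W) ∈ T(r,C₀) and let C₂ > 1 be a constant such that Φ(y,t) ≤ C₂ Φ(x,t) + C₂ t^{r+1} whenever t ∈ (0,1) and |y − x| ≤ t. Then for every μ ≥ 1 and all x, y ∈ ℝ^d with |y − x| ≤ R(x,μ)/(2C₂), one has 1/(2C₂) ≤ R(y,μ)/R(x,μ) ≤ 2C₂. -/
open MeasureTheory Real Filter

noncomputable section

section Aux
variable {d p : ℕ} (A : Fin d → Rd d → ℝ) (U : Fin p → Rd d → ℝ) (V : Rd d → ℝ) (r : ℕ)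

lemma phi_nonneg (x : Rd d) {t : ℝ} (ht : 0 ≤ t) : 0 ≤ Phi A U V r x t := by
  unfold Phi; positivity

lemma phi_cont (x : Rd d) : Continuous (fun t => Phi A U V r x t) := by
  unfold Phi; fun_prop

lemma phi_zero (x : Rd d) : Phi A U V r x 0 = 0 := by
  simp [Phi]

lemma phi_scale (x : Rd d) {l t : ℝ} (hl0 : 0 ≤ l) (hl1 : l ≤ 1) (ht : 0 ≤ t) :
    Phi A U V r x (l * t) ≤ l * Phi A U V r x t := by
  unfold Phi
  simp only [mul_add, Finset.mul_sum, mul_pow, ← mul_assoc]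
  gcongr with i hi q hq <;>
    first
      | positivity
      | exact pow_le_of_le_one hl0 hl1 (by omega)

lemma R_bddAbove (x : Rd d) (μ : ℝ) :
    BddAbove {t : ℝ | t ∈ Set.Icc (0:ℝ) 1 ∧ Phi A U V r x t ≤ μ} :=
  ⟨1, fun t ht => ht.1.2⟩

lemma R_mem (x : Rd d) {μ : ℝ} (hμ : 1 ≤ μ) :
    Rfun A U V r x μ ∈ Set.Icc (0:ℝ) 1 ∧ Phi A U V r x (Rfun A U V r x μ) ≤ μ := by
  have heq : {t : ℝ | t ∈ Set.Icc (0:ℝ) 1 ∧ Phi A U V r x t ≤ μ}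
      = Set.Icc (0:ℝ) 1 ∩ (fun t => Phi A U V r x t) ⁻¹' Set.Iic μ := by
    ext t; simp [Set.mem_Icc, and_assoc]
  have hcomp : IsCompact {t : ℝ | t ∈ Set.Icc (0:ℝ) 1 ∧ Phi A U V r x t ≤ μ} := by
    rw [heq]
    exact isCompact_Icc.inter_right (isClosed_Iic.preimage (phi_cont A U V r x))
  have hne : ({t : ℝ | t ∈ Set.Icc (0:ℝ) 1 ∧ Phi A U V r x t ≤ μ}).Nonempty :=
    ⟨0, ⟨le_refl 0, zero_le_one⟩, by rw [phi_zero]; linarith⟩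
  exact hcomp.sSup_mem hne

lemma R_pos (x : Rd d) {μ : ℝ} (hμ : 1 ≤ μ) : 0 < Rfun A U V r x μ := by
  set c := Phi A U V r x 1 with hc
  have hc0 : 0 ≤ c := phi_nonneg A U V r x zero_le_one
  have ht1 : (0:ℝ) < 1 / (c + 1) := by positivity
  have hmem : 1 / (c + 1) ∈ {t : ℝ | t ∈ Set.Icc (0:ℝ) 1 ∧ Phi A U V r x t ≤ μ} := by
    constructor
    · constructor
      · positivity
      · rw [div_le_one (by linarith)]; linarith
    · have := phi_scale A U V r x (l := 1 / (c + 1)) (t := 1)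
        (by positivity) (by rw [div_le_one (by linarith)]; linarith) zero_le_one
      rw [mul_one] at this
      calc Phi A U V r x (1 / (c + 1)) ≤ (1 / (c + 1)) * c := this
        _ ≤ 1 := by rw [div_mul_eq_mul_div, div_le_one (by linarith)]; linarith
        _ ≤ μ := hμ
  exact lt_of_lt_of_le ht1 (le_csSup (R_bddAbove A U V r x μ) hmem)

end Aux

section Key
variable {d p r : ℕ} {A : Fin d → Rd d → ℝ} {U : Fin p → Rd d → ℝ} {V : Rd d → ℝ}

lemma R_key (hr : 1 ≤ r) {C₂ : ℝ} (hC₂ : 1 < C₂)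
    (hPhi : ∀ t ∈ Set.Ioo (0:ℝ) 1, ∀ x y : Rd d, dist y x ≤ t →
      Phi A U V r y t ≤ C₂ * Phi A U V r x t + C₂ * t^(r+1))
    {μ : ℝ} (hμ : 1 ≤ μ) (x y : Rd d)
    (h : dist y x ≤ Rfun A U V r x μ / (2 * C₂)) :
    Rfun A U V r x μ / (2 * C₂) ≤ Rfun A U V r y μ := by
  set Rx := Rfun A U V r x μ with hRx
  obtain ⟨⟨hRx0, hRx1⟩, hPhix⟩ := R_mem A U V r x hμ
  have hRxpos : 0 < Rx := R_pos A U V r x hμ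
  set t₀ := Rx / (2 * C₂) with ht₀
  have hC₂0 : (0:ℝ) < 2 * C₂ := by linarith
  have ht₀pos : 0 < t₀ := by positivity
  have ht₀le : t₀ ≤ 1 / (2 * C₂) := by
    rw [ht₀, div_le_div_iff₀ hC₂0 hC₂0]; nlinarith
  have ht₀lt1 : t₀ < 1 := lt_of_le_of_lt ht₀le (by rw [div_lt_one hC₂0]; linarith)
  have hkey := hPhi t₀ ⟨ht₀pos, ht₀lt1⟩ x y h
  have hscale : Phi A U V r x t₀ ≤ (1 / (2 * C₂)) * Phi A U V r x Rx := by
    have he : t₀ = (1 / (2 * C₂)) * Rx := by rw [ht₀]; ring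
    rw [he]
    exact phi_scale A U V r x (by positivity)
      (by rw [div_le_one hC₂0]; linarith) hRx0
  have hpow : t₀ ^ (r + 1) ≤ t₀ ^ 2 :=
    pow_le_pow_of_le_one ht₀pos.le ht₀lt1.le (by omega)
  have ht2 : t₀ ^ 2 ≤ (1 / (2 * C₂)) ^ 2 := by
    apply pow_le_pow_left₀ ht₀pos.le ht₀le
  have hPy : Phi A U V r y t₀ ≤ μ := by
    have h1 : C₂ * Phi A U V r x t₀ ≤ μ / 2 := by
      calc C₂ * Phi A U V r x t₀ ≤ C₂ * ((1 / (2 * C₂)) * Phi A U V r x Rx) := by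
            apply mul_le_mul_of_nonneg_left hscale (by linarith)
        _ = Phi A U V r x Rx / 2 := by field_simp
        _ ≤ μ / 2 := by have h' := hPhix; rw [← hRx] at h'; linarith
    have h2 : C₂ * t₀ ^ (r + 1) ≤ μ / 2 := by
      have : t₀ ^ (r+1) ≤ (1 / (2 * C₂)) ^ 2 := hpow.trans ht2
      have h3 : C₂ * (1 / (2 * C₂)) ^ 2 = 1 / (4 * C₂) := by field_simp; ring
      have h4 : C₂ * t₀ ^ (r+1) ≤ 1/(4*C₂) := by
        rw [← h3]; exact mul_le_mul_of_nonneg_left this (by linarith)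
      have h5 : 1/(4*C₂) ≤ 1/4 := by
        rw [div_le_div_iff₀ (by linarith) (by norm_num)]; linarith
      linarith
    linarith
  have hmem : t₀ ∈ {t : ℝ | t ∈ Set.Icc (0:ℝ) 1 ∧ Phi A U V r y t ≤ μ} :=
    ⟨⟨ht₀pos.le, ht₀lt1.le⟩, hPy⟩
  exact le_csSup (R_bddAbove A U V r y μ) hmem

end Key
/-- comparability of `R(·,μ)` at nearby points. -/
theorem statement_11 (d p r : ℕ) (hd : 1 ≤ d) (hr : 1 ≤ r)
    (A : Fin d → Rd d → ℝ) (U : Fin p → Rd d → ℝ) (V : Rd d → ℝ)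
    (hA : ∀ j, ContDiff ℝ (⊤ : ℕ∞) (A j)) (hU : ∀ ℓ, ContDiff ℝ (⊤ : ℕ∞) (U ℓ)) (hV : ContDiff ℝ (⊤ : ℕ∞) V)
    (C₀ : ℝ) (hC₀ : 0 < C₀)
    (hT : ∀ x, mq A U V (r+1) x ≤ C₀ * mr A U V r x)
    (C₂ : ℝ) (hC₂ : 1 < C₂)
    (hPhi : ∀ t ∈ Set.Ioo (0:ℝ) 1, ∀ x y : Rd d, dist y x ≤ t →
      Phi A U V r y t ≤ C₂ * Phi A U V r x t + C₂ * t^(r+1)) :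
    ∀ μ : ℝ, 1 ≤ μ → ∀ x y : Rd d,
      dist y x ≤ Rfun A U V r x μ / (2 * C₂) →
      1 / (2 * C₂) ≤ Rfun A U V r y μ / Rfun A U V r x μ ∧
        Rfun A U V r y μ / Rfun A U V r x μ ≤ 2 * C₂ := by
  intro μ hμ x y h
  have hC₂0 : (0:ℝ) < 2 * C₂ := by linarith
  have hRx : 0 < Rfun A U V r x μ := R_pos A U V r x hμ
  have hRy : 0 < Rfun A U V r y μ := R_pos A U V r y hμ
  have hlow := R_key hr hC₂ hPhi hμ x y h
  constructor
  · rw [le_div_iff₀ hRx]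
    calc 1 / (2 * C₂) * Rfun A U V r x μ = Rfun A U V r x μ / (2 * C₂) := by ring
      _ ≤ Rfun A U V r y μ := hlow
  · by_contra hcon
    push_neg at hcon
    rw [lt_div_iff₀ hRx] at hcon
    have hxy : dist x y ≤ Rfun A U V r y μ / (2 * C₂) := by
      rw [dist_comm]
      refine h.trans ?_
      gcongr
      nlinarith
    have hup := R_key hr hC₂ hPhi hμ y x hxy
    rw [div_le_iff₀ hC₂0] at hup
    nlinarith

end
end
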